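/- Every nonempty p-pseudoconcave subset X of a complex manifold V satisfies the maximum principle for holomorphic functions: no holomorphic function on an open subset of V admits a strict local maximum of its modulus at a point of X. -/

import Mathlib

open MeasureTheory Metric Set Filter Bornology Topology

noncomputable section

/-- `ℂⁿ` with its Euclidean structure. -/
abbrev CSp (n : ℕ) := EuclideanSpace ℂ (Fin n)

instance (n : ℕ) : MeasureSpace (CSp n) :=
  ⟨Measure.map (WithLp.toLp 2) (volume : Measure (∀ _ : Fin n, ℂ))⟩
instance (n : ℕ) : BorelSpace (CSp n) := inferInstance
/-- The union of the unbounded connected components of the complement of `K` in `ℂᵖ`. -/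
def unbddCompl {p : ℕ} (K : Set (CSp p)) : Set (CSp p) :=
  ⋃₀ {C | C ⊆ Kᶜ ∧ IsConnected C ∧ ¬Bornology.IsBounded C}

/-- `U` is relatively open in `V`. -/
def RelOpen {n : ℕ} (V U : Set (CSp n)) : Prop := ∃ O, IsOpen O ∧ U = V ∩ O

/-- `f` is holomorphic along `V` on `W ⊆ V`: near each point of `W` it extends to a
holomorphic map of a full neighbourhood in `ℂⁿ` (for `V` open this is just holomorphy on `W`;
for `V` a submanifold this is the usual notion of holomorphy on `V`). -/
def HolomorphicAlong {n q : ℕ} (V W : Set (CSp n)) (f : CSp n → CSp q) : Prop :=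
  ∀ a ∈ W, ∃ O : Set (CSp n), IsOpen O ∧ a ∈ O ∧
    ∃ g : CSp n → CSp q, DifferentiableOn ℂ g O ∧ ∀ x ∈ O ∩ V, g x = f x

/-- `X` is a `p`-pseudoconcave subset of (the complex manifold) `V`: `X` is closed in `V` and
for every relatively open `U ⊂⊂ V` and every holomorphic map `f` from a neighbourhood of the
closure of `U` (in `V`) into `ℂᵖ`, `f(X ∩ U)` avoids the unbounded component of
`ℂᵖ \ f(X ∩ ∂U)`, where `∂U = closure U \ U` is the boundary of `U` in `V`. -/
def IsPseudoconcave {n : ℕ} (p : ℕ) (V X : Set (CSp n)) : Prop :=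
  X ⊆ V ∧ (V ∩ closure X ⊆ X) ∧
  ∀ U : Set (CSp n), RelOpen V U → IsCompact (closure U) → closure U ⊆ V →
    ∀ W : Set (CSp n), RelOpen V W → closure U ⊆ W →
      ∀ f : CSp n → CSp p, HolomorphicAlong V W f →
        f '' (X ∩ U) ⊆ (unbddCompl (f '' (X ∩ (closure U \ U))))ᶜ

/-
The modulus of `h` on `X ∩ ∂B` for a small ball `B` around `a` stays below some `r < |h(a)|`,
by compactness and strictness of the maximum. Embedding `h` into `ℂᵖ` along a unit vector, the
image of `X ∩ ∂B` then lies in the closed ball of radius `r`, whose exterior is connected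
(real dimension `2p ≥ 2`) and unbounded; so the image of `a ∈ X ∩ B` lies in an unbounded
component of the complement of the image of `X ∩ ∂B`, contradicting pseudoconcavity.
-/

section
variable {E : Type*} [NormedAddCommGroup E] [NormedSpace ℝ E]

theorem isPathConnected_compl_closedBall (h : 1 < Module.rank ℝ E) (x : E) (r : ℝ) :
    IsPathConnected (closedBall x r)ᶜ := by
  rcases lt_or_ge r 0 with hr | hr
  · simpa [closedBall_eq_empty.2 hr] using isPathConnected_univ
  -- `y ↦ x + (‖y‖ + r) • (y / ‖y‖)` maps `{0}ᶜ` onto the exterior of the ball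
  let f : E → E := fun y ↦ x + (1 + r * ‖y‖⁻¹) • y
  have hf : ContinuousOn f {0}ᶜ := fun y hy ↦
    (continuousAt_const.add ((continuousAt_const.add (continuousAt_const.mul
      (continuousAt_id.norm.inv₀ (by simpa using hy)))).smul continuousAt_id)).continuousWithinAt
  convert (isPathConnected_compl_singleton_of_one_lt_rank h 0).image' hf using 1
  ext w
  constructor
  · intro hw
    have hw : r < ‖w - x‖ := by simpa [dist_eq_norm] using hw
    have hpos : 0 < ‖w - x‖ - r := by linarith
    have hc : 0 < ‖w - x‖ := by linarith
    have hcoef : 0 < 1 - r * ‖w - x‖⁻¹ := by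
      rw [sub_pos, ← div_eq_mul_inv, div_lt_one hc]; exact hw
    have hy : ‖(1 - r * ‖w - x‖⁻¹) • (w - x)‖ = ‖w - x‖ - r := by
      rw [norm_smul, Real.norm_of_nonneg hcoef.le, sub_mul, mul_assoc, inv_mul_cancel₀ hc.ne']
      ring
    refine ⟨(1 - r * ‖w - x‖⁻¹) • (w - x), ?_, ?_⟩
    · rw [mem_compl_singleton_iff, ← norm_ne_zero_iff, hy]; exact hpos.ne'
    · simp only [f, hy, smul_smul]
      rw [show (1 + r * (‖w - x‖ - r)⁻¹) * (1 - r * ‖w - x‖⁻¹) = 1 by field_simp; ring]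
      simp
  · rintro ⟨y, hy, rfl⟩
    have hy : 0 < ‖y‖ := by simpa using hy
    simp only [mem_compl_iff, mem_closedBall, dist_eq_norm, not_le, f, add_sub_cancel_left,
      norm_smul]
    rw [Real.norm_of_nonneg (by positivity), add_mul, mul_assoc, inv_mul_cancel₀ hy.ne']
    linarith

theorem not_isBounded_compl_of_isBounded [Nontrivial E] {s : Set E} (hs : IsBounded s) :
    ¬IsBounded sᶜ := fun hsc ↦
  NormedSpace.unbounded_univ ℝ E (by simpa using hs.union hsc)

end

theorem IsCompact.exists_lt_subset_closedBall {E : Type*} [SeminormedAddCommGroup E]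
    {K : Set E} (hK : IsCompact K) {c : ℝ} (hc : ∀ k ∈ K, ‖k‖ < c) :
    ∃ r < c, K ⊆ closedBall 0 r := by
  rcases K.eq_empty_or_nonempty with rfl | hne
  · exact ⟨c - 1, by linarith, empty_subset _⟩
  obtain ⟨k, hk, hmax⟩ := hK.exists_isMaxOn hne continuous_norm.continuousOn
  exact ⟨‖k‖, hc k hk, fun z hz ↦ mem_closedBall_zero_iff.2 (hmax hz)⟩

theorem IsCompact.inter_left_of_inter_closure_subset {α : Type*} [TopologicalSpace α]
    {X V K : Set α} (hK : IsCompact K) (hX : V ∩ closure X ⊆ X) (hKV : K ⊆ V) :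
    IsCompact (X ∩ K) := by
  have : X ∩ K = closure X ∩ K := subset_antisymm
    (inter_subset_inter_left K subset_closure) fun z hz ↦ ⟨hX ⟨hKV hz.2, hz.1⟩, hz.2⟩
  exact this ▸ hK.inter_left isClosed_closure

theorem CSp.one_lt_rank_real {p : ℕ} (hp : 1 ≤ p) : 1 < Module.rank ℝ (CSp p) := by
  have h2 : Module.finrank ℝ ℂ * Module.finrank ℂ (CSp p) = Module.finrank ℝ (CSp p) :=
    Module.finrank_mul_finrank ℝ ℂ (CSp p)
  rw [Complex.finrank_real_complex, finrank_euclideanSpace_fin] at h2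
  rw [← Module.finrank_eq_rank ℝ, ← h2]
  exact_mod_cast by omega

theorem mem_unbddCompl_of_norm_lt {p : ℕ} (hp : 1 ≤ p) {K : Set (CSp p)} (hK : IsCompact K)
    {w : CSp p} (hw : ∀ k ∈ K, ‖k‖ < ‖w‖) : w ∈ unbddCompl K := by
  have hrank := CSp.one_lt_rank_real hp
  have : Nontrivial (CSp p) := rank_pos_iff_nontrivial.1 (zero_lt_one.trans hrank)
  obtain ⟨r, hr, hKr⟩ := hK.exists_lt_subset_closedBall hw
  refine mem_sUnion.2 ⟨(closedBall 0 r)ᶜ, ⟨compl_subset_compl.2 hKr,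
    (isPathConnected_compl_closedBall hrank 0 r).isConnected,
    not_isBounded_compl_of_isBounded isBounded_closedBall⟩, ?_⟩
  simpa using hr

theorem pseudoconcave_maximum_principle_general {n : ℕ} (p : ℕ) (hp : 1 ≤ p)
    (V X : Set (CSp n)) (hX : IsPseudoconcave p V X)
    (O : Set (CSp n)) (hOV : O ⊆ V)
    (h : CSp n → ℂ) (hh : DifferentiableOn ℂ h O) (a : CSp n) (ha : a ∈ X ∩ O) :
    ¬ ∃ U : Set (CSp n), IsOpen U ∧ a ∈ U ∧ U ⊆ O ∧
        ∀ z ∈ X ∩ U, z ≠ a → ‖h z‖ < ‖h a‖ := by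
  rintro ⟨U, hU, haU, hUO, hmax⟩
  obtain ⟨ε, hε, hεU⟩ := nhds_basis_closedBall.mem_iff.1 (hU.mem_nhds haU)
  have hεV : closedBall a ε ⊆ V := hεU.trans (hUO.trans hOV)
  have hcl : closure (ball a ε) = closedBall a ε := closure_ball a hε.ne'
  set e : CSp p := EuclideanSpace.single ⟨0, hp⟩ 1
  have he : ‖e‖ = 1 := by simp [e]
  set f : CSp n → CSp p := fun z ↦ h z • e
  have hf : DifferentiableOn ℂ f U := (hh.mono hUO).smul_const e
  have hconcave := hX.2.2 (ball a ε)
    ⟨ball a ε, isOpen_ball, (inter_eq_right.2 (ball_subset_closedBall.trans hεV)).symm⟩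
    (hcl ▸ isCompact_closedBall a ε) (hcl ▸ hεV) (V ∩ U) ⟨U, hU, rfl⟩
    (hcl ▸ subset_inter hεV hεU) f fun z hz ↦ ⟨U, hU, hz.2, f, hf, fun _ _ ↦ rfl⟩
  rw [hcl, closedBall_sdiff_ball] at hconcave
  refine hconcave ⟨a, ⟨ha.1, mem_ball_self hε⟩, rfl⟩ (mem_unbddCompl_of_norm_lt hp ?_ ?_)
  · exact ((isCompact_sphere a ε).inter_left_of_inter_closure_subset hX.2.1
      (sphere_subset_closedBall.trans hεV)).image_of_continuousOn
      (hf.continuousOn.mono fun z hz ↦ hεU (sphere_subset_closedBall hz.2))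
  · rintro _ ⟨z, ⟨hzX, hz⟩, rfl⟩
    simp only [f, norm_smul, he, mul_one]
    exact hmax z ⟨hzX, hεU (sphere_subset_closedBall hz)⟩ (ne_of_mem_sphere hz hε.ne')

/-- A nonempty `p`-pseudoconcave subset `X` of a complex manifold `V` (here an
open subset of `ℂⁿ`) satisfies the maximum principle: no function `h` holomorphic on an open
subset `O` of `V` admits a strict local maximum of its modulus on `X` at a point `a ∈ X ∩ O`. -/
theorem pseudoconcave_maximum_principle {n : ℕ} (p : ℕ) (hp : 1 ≤ p)
    (V X : Set (CSp n)) (hV : IsOpen V) (hX : IsPseudoconcave p V X) (hne : X.Nonempty)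
    (O : Set (CSp n)) (hO : IsOpen O) (hOV : O ⊆ V)
    (h : CSp n → ℂ) (hh : DifferentiableOn ℂ h O) (a : CSp n) (ha : a ∈ X ∩ O) :
    ¬ ∃ U : Set (CSp n), IsOpen U ∧ a ∈ U ∧ U ⊆ O ∧
        ∀ z ∈ X ∩ U, z ≠ a → ‖h z‖ < ‖h a‖ :=
  pseudoconcave_maximum_principle_general p hp V X hX O hOV h hh a ha

end
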